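/- arXiv:math/0602416 — 2 statements merged into one kernel-verified Lean document; each statement's English description precedes it below -/
import Mathlib

section
/- Set ν = η_d(θ_0) η*_d(θ*_0) / (ϕ_1 ϕ_2 ⋯ ϕ_d) and ν' = τ_d(θ_d) τ*_d(θ*_d) / (ϕ_1 ϕ_2 ⋯ ϕ_d) (these denominators and the scalars η_d(θ_0), η*_d(θ*_0), τ_d(θ_d), τ*_d(θ*_d) are nonzero). Then for all 0≤i,j≤d, (ν / (φ_1 φ_2 ⋯ φ_j)) · τ_i(A) E*_0 E_0 τ*_j(A*) = (ν' / (φ_d φ_{d−1} ⋯ φ_{i+1})) · η*_{d−i}(A*) E_d E*_d η_{d−j}(A). -/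
open Polynomial Matrix Finset

noncomputable section

/-- The lower bidiagonal matrix with diagonal entries `θ 0, …, θ d` and
subdiagonal entries `1`. -/
def matA {K : Type*} [Field K] (d : ℕ) (θ : ℕ → K) :
    Matrix (Fin (d + 1)) (Fin (d + 1)) K :=
  Matrix.of fun i j =>
    if (i : ℕ) = (j : ℕ) then θ (i : ℕ)
    else if (i : ℕ) = (j : ℕ) + 1 then 1 else 0

/-- The upper bidiagonal matrix with diagonal entries `θs 0, …, θs d` and
superdiagonal entries `φ 1, …, φ d` (the `(i-1,i)`-entry is `φ i`). -/
def matAs {K : Type*} [Field K] (d : ℕ) (θs φ : ℕ → K) :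
    Matrix (Fin (d + 1)) (Fin (d + 1)) K :=
  Matrix.of fun i j =>
    if (i : ℕ) = (j : ℕ) then θs (i : ℕ)
    else if (j : ℕ) = (i : ℕ) + 1 then φ (j : ℕ) else 0

/-- The primitive idempotent `E_i = ∏_{j ≠ i} (M - θ_j I)/(θ_i - θ_j)` of a matrix `M`
with eigenvalues `θ 0, …, θ d`. -/
def primIdem {K : Type*} [Field K] (d : ℕ) (θ : ℕ → K)
    (M : Matrix (Fin (d + 1)) (Fin (d + 1)) K) (i : ℕ) :
    Matrix (Fin (d + 1)) (Fin (d + 1)) K :=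
  Polynomial.aeval M (∏ j ∈ (Finset.range (d + 1)).erase i,
    (Polynomial.C ((θ i - θ j)⁻¹) * (Polynomial.X - Polynomial.C (θ j))))

/-- `τ_i(λ) = (λ - θ_0)(λ - θ_1)⋯(λ - θ_{i-1})`. -/
def tauPoly {K : Type*} [Field K] (θ : ℕ → K) (i : ℕ) : Polynomial K :=
  ∏ k ∈ Finset.range i, (Polynomial.X - Polynomial.C (θ k))

/-- `η_i(λ) = (λ - θ_d)(λ - θ_{d-1})⋯(λ - θ_{d-i+1})`. -/
def etaPoly {K : Type*} [Field K] (d : ℕ) (θ : ℕ → K) (i : ℕ) : Polynomial K :=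
  ∏ k ∈ Finset.range i, (Polynomial.X - Polynomial.C (θ (d - k)))

/-!
Both sides are multiples of the matrix unit `e_i e_jᵀ`. The rows of `E₀` are left
`θ₀`-eigenvectors of the lower bidiagonal `A`, hence multiples of `e₀ᵀ`; likewise the columns of
`E*₀` are multiples of `e₀`, so `E*₀ E₀ = c e₀ e₀ᵀ`, and symmetrically `E_d E*_d = c' e_d e_dᵀ`.
Since `τ_i(A) e₀ = e_i` and `e₀ᵀ τ*_j(A*) = φ₁⋯φ_j e_jᵀ` (and similarly for `η`, `η*` at the
other end), the identity reduces to `c η_d(θ₀) η*_d(θ*₀) = ϕ₁⋯ϕ_d = c' τ_d(θ_d) τ*_d(θ*_d)`.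

In the basis `v` the pair `(A, A*)` has the same bidiagonal shape, with `θ` reversed and `φ`
replaced by `ϕ`. Pairing eigenvectors of `A` and `A*` with `v` (for `c`) or with the dual basis
(for `c'`) gives two-term recurrences along the basis, whose products are exactly these scalars.
-/

lemma Lagrange.basis_mul_X_sub_C {F ι : Type*} [Field F] [DecidableEq ι] {s : Finset ι}
    {v : ι → F} {i : ι} (hi : i ∈ s) :
    Lagrange.basis s v i * (X - C (v i)) = C (Lagrange.nodalWeight s v i) * Lagrange.nodal s v := by
  rw [Lagrange.nodal_eq_mul_nodal_erase hi, Lagrange.basis, Lagrange.nodalWeight, Lagrange.nodal]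
  simp_rw [Lagrange.basisDivisor, prod_mul_distrib, map_prod]
  ring

lemma Matrix.nonsing_inv_mul_eq_of_mul_eq {K n : Type*} [Field K] [Fintype n] [DecidableEq n]
    {V A B : Matrix n n K} (hV : IsUnit V.det) (h : A * V = V * B) : V⁻¹ * A = B * V⁻¹ :=
  calc V⁻¹ * A = V⁻¹ * (A * V) * V⁻¹ := by
        rw [← Matrix.mul_assoc, mul_nonsing_inv_cancel_right _ _ hV]
    _ = B * V⁻¹ := by rw [h, nonsing_inv_mul_cancel_left _ _ hV]

section Eigenvectors

variable {K : Type*} [Field K] {n : Type*} [Fintype n]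

lemma mulVec_mulVec_eq_smul_of_mul_eq {A B V : Matrix n n K} (h : A * V = V * B) {w : n → K}
    {μ : K} (hw : B *ᵥ w = μ • w) : A *ᵥ (V *ᵥ w) = μ • (V *ᵥ w) := by
  rw [mulVec_mulVec, h, ← mulVec_mulVec, hw, mulVec_smul]

lemma vecMul_vecMul_eq_smul_of_mul_eq {A B V : Matrix n n K} (h : A * V = V * B) {w : n → K}
    {μ : K} (hw : w ᵥ* A = μ • w) : (w ᵥ* V) ᵥ* B = μ • (w ᵥ* V) := by
  rw [vecMul_vecMul, ← h, ← vecMul_vecMul, hw, smul_vecMul]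

variable [DecidableEq n] {M : Matrix n n K}

lemma aeval_mulVec_of_mulVec_eq_smul {u : n → K} {μ : K} (h : M *ᵥ u = μ • u) (p : K[X]) :
    aeval M p *ᵥ u = p.eval μ • u := by
  have hM : Matrix.toLinAlgEquiv' M u = μ • u := by rwa [Matrix.toLinAlgEquiv'_apply]
  rw [← Matrix.toLinAlgEquiv'_apply, ← Module.End.aeval_apply_of_mem_apply_eq_smul hM,
    Polynomial.aeval_algEquiv, AlgHom.comp_apply]
  rfl

lemma vecMul_aeval_of_vecMul_eq_smul {u : n → K} {μ : K} (h : u ᵥ* M = μ • u) (p : K[X]) :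
    u ᵥ* aeval M p = p.eval μ • u := by
  induction p using Polynomial.induction_on with
  | C a => simp [Algebra.algebraMap_eq_smul_one, vecMul_smul]
  | add p q hp hq => simp [vecMul_add, hp, hq, add_smul]
  | monomial k a ih =>
    rw [pow_succ, ← mul_assoc, map_mul, ← vecMul_vecMul, ih, aeval_X, smul_vecMul, h, smul_smul,
      eval_mul_X]

lemma aeval_X_sub_C_mulVec (a : K) (u : n → K) : aeval M (X - C a) *ᵥ u = M *ᵥ u - a • u := by
  simp [sub_mulVec, Algebra.algebraMap_eq_smul_one, smul_mulVec]

lemma vecMul_aeval_X_sub_C (a : K) (u : n → K) : u ᵥ* aeval M (X - C a) = u ᵥ* M - a • u := by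
  simp [vecMul_sub, Algebra.algebraMap_eq_smul_one, vecMul_smul]

end Eigenvectors

section PrimitiveIdempotent

variable {K : Type*} [Field K] {d i : ℕ} {θ : ℕ → K} {M : Matrix (Fin (d + 1)) (Fin (d + 1)) K}

lemma primIdem_eq_aeval_basis :
    primIdem d θ M i = aeval M (Lagrange.basis (range (d + 1)) θ i) := rfl

lemma aeval_nodal_of_charpoly_eq (h : M.charpoly = ∏ k : Fin (d + 1), (X - C (θ k))) :
    aeval M (Lagrange.nodal (range (d + 1)) θ) = 0 := by
  rw [Lagrange.nodal, ← Fin.prod_univ_eq_prod_range (fun j => X - C (θ j)), ← h]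
  exact aeval_self_charpoly M

lemma primIdem_mul_self (hM : aeval M (Lagrange.nodal (range (d + 1)) θ) = 0) (hi : i ≤ d) :
    primIdem d θ M i * M = θ i • primIdem d θ M i := by
  have h := congrArg (aeval M)
    (Lagrange.basis_mul_X_sub_C (s := range (d + 1)) (v := θ) (i := i) (mem_range.2 (by omega)))
  rw [map_mul, map_mul, hM, mul_zero, map_sub, aeval_X, aeval_C, mul_sub, sub_eq_zero,
    Algebra.algebraMap_eq_smul_one, mul_smul_comm, mul_one] at h
  rwa [primIdem_eq_aeval_basis]

lemma self_mul_primIdem (hM : aeval M (Lagrange.nodal (range (d + 1)) θ) = 0) (hi : i ≤ d) :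
    M * primIdem d θ M i = θ i • primIdem d θ M i := by
  rw [← primIdem_mul_self hM hi, primIdem_eq_aeval_basis]
  simpa only [map_mul, aeval_X] using
    congrArg (aeval M) (mul_comm X (Lagrange.basis (range (d + 1)) θ i))

lemma primIdem_mulVec_of_mulVec_eq_smul (hθ : Set.InjOn θ (range (d + 1))) (hi : i ≤ d)
    {u : Fin (d + 1) → K} (hu : M *ᵥ u = θ i • u) : primIdem d θ M i *ᵥ u = u := by
  rw [primIdem_eq_aeval_basis, aeval_mulVec_of_mulVec_eq_smul hu,
    Lagrange.eval_basis_self hθ (mem_range.2 (by omega)), one_smul]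

lemma vecMul_primIdem_of_vecMul_eq_smul (hθ : Set.InjOn θ (range (d + 1))) (hi : i ≤ d)
    {u : Fin (d + 1) → K} (hu : u ᵥ* M = θ i • u) : u ᵥ* primIdem d θ M i = u := by
  rw [primIdem_eq_aeval_basis, vecMul_aeval_of_vecMul_eq_smul hu,
    Lagrange.eval_basis_self hθ (mem_range.2 (by omega)), one_smul]

end PrimitiveIdempotent

section UnitVectors

variable {K : Type*} [Field K] {d k : ℕ}

/-- For `k > d` this is the zero vector, so that the action of the bidiagonal matrices on
`unitVec K d k` needs no case split at `k = d`. -/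
def unitVec (K : Type*) [Field K] (d k : ℕ) : Fin (d + 1) → K :=
  fun r => if (r : ℕ) = k then 1 else 0

lemma unitVec_eq_single (k : Fin (d + 1)) : unitVec K d k = Pi.single k 1 := by
  ext r
  simp [unitVec, Pi.single_apply, Fin.ext_iff]

lemma unitVec_eq_zero (hk : d < k) : unitVec K d k = 0 := by
  ext r
  simp [unitVec, show (r : ℕ) ≠ k by omega]

lemma dotProduct_unitVec (x : Fin (d + 1) → K) (k : Fin (d + 1)) :
    x ⬝ᵥ unitVec K d k = x k := by
  rw [unitVec_eq_single, dotProduct_single_one]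

lemma unitVec_dotProduct (x : Fin (d + 1) → K) (k : Fin (d + 1)) :
    unitVec K d k ⬝ᵥ x = x k := by
  rw [unitVec_eq_single, single_one_dotProduct]

lemma unitVec_dotProduct_self (hk : k ≤ d) : unitVec K d k ⬝ᵥ unitVec K d k = 1 := by
  rw [show k = ((⟨k, by omega⟩ : Fin (d + 1)) : ℕ) from rfl, unitVec_dotProduct]
  exact if_pos rfl

lemma unitVec_ne_zero (hk : k ≤ d) : unitVec K d k ≠ 0 := fun h => by
  simpa [h] using unitVec_dotProduct_self (K := K) hk

lemma mulVec_unitVec_apply (M : Matrix (Fin (d + 1)) (Fin (d + 1)) K) (hk : k ≤ d)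
    (r : Fin (d + 1)) : (M *ᵥ unitVec K d k) r = M r ⟨k, by omega⟩ := by
  rw [show unitVec K d k = Pi.single ⟨k, by omega⟩ 1 from unitVec_eq_single ⟨k, by omega⟩,
    mulVec_single_one]
  rfl

lemma unitVec_vecMul_apply (M : Matrix (Fin (d + 1)) (Fin (d + 1)) K) (hk : k ≤ d)
    (r : Fin (d + 1)) : (unitVec K d k ᵥ* M) r = M ⟨k, by omega⟩ r := by
  rw [show unitVec K d k = Pi.single ⟨k, by omega⟩ 1 from unitVec_eq_single ⟨k, by omega⟩,
    single_one_vecMul]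
  rfl

end UnitVectors

section Bidiagonal

variable {K : Type*} [Field K] {d k : ℕ} (θ θs φ : ℕ → K)

lemma matA_mulVec_unitVec (hk : k ≤ d) :
    matA d θ *ᵥ unitVec K d k = θ k • unitVec K d k + unitVec K d (k + 1) := by
  ext r
  simp only [mulVec_unitVec_apply _ hk, matA, unitVec, of_apply, Pi.add_apply, Pi.smul_apply,
    smul_eq_mul]
  grind

lemma matA_mulVec_unitVec_last : matA d θ *ᵥ unitVec K d d = θ d • unitVec K d d := by
  rw [matA_mulVec_unitVec θ le_rfl, unitVec_eq_zero (k := d + 1) (by omega), add_zero]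

lemma unitVec_zero_vecMul_matA : unitVec K d 0 ᵥ* matA d θ = θ 0 • unitVec K d 0 := by
  ext r
  simp only [unitVec_vecMul_apply _ d.zero_le, matA, unitVec, of_apply, Pi.smul_apply,
    smul_eq_mul]
  grind

lemma unitVec_succ_vecMul_matA (hk : k + 1 ≤ d) :
    unitVec K d (k + 1) ᵥ* matA d θ = θ (k + 1) • unitVec K d (k + 1) + unitVec K d k := by
  ext r
  simp only [unitVec_vecMul_apply _ hk, matA, unitVec, of_apply, Pi.add_apply, Pi.smul_apply,
    smul_eq_mul]
  grind

lemma matAs_mulVec_unitVec_zero : matAs d θs φ *ᵥ unitVec K d 0 = θs 0 • unitVec K d 0 := by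
  ext r
  simp only [mulVec_unitVec_apply _ d.zero_le, matAs, unitVec, of_apply, Pi.smul_apply,
    smul_eq_mul]
  grind

lemma matAs_mulVec_unitVec_succ (hk : k + 1 ≤ d) :
    matAs d θs φ *ᵥ unitVec K d (k + 1) =
      θs (k + 1) • unitVec K d (k + 1) + φ (k + 1) • unitVec K d k := by
  ext r
  simp only [mulVec_unitVec_apply _ hk, matAs, unitVec, of_apply, Pi.add_apply, Pi.smul_apply,
    smul_eq_mul]
  grind

lemma unitVec_vecMul_matAs (hk : k ≤ d) :
    unitVec K d k ᵥ* matAs d θs φ = θs k • unitVec K d k + φ (k + 1) • unitVec K d (k + 1) := by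
  ext r
  simp only [unitVec_vecMul_apply _ hk, matAs, unitVec, of_apply, Pi.add_apply, Pi.smul_apply,
    smul_eq_mul]
  grind

lemma unitVec_last_vecMul_matAs : unitVec K d d ᵥ* matAs d θs φ = θs d • unitVec K d d := by
  rw [unitVec_vecMul_matAs θs φ le_rfl, unitVec_eq_zero (k := d + 1) (by omega), smul_zero,
    add_zero]

lemma aeval_matA_nodal : aeval (matA d θ) (Lagrange.nodal (range (d + 1)) θ) = 0 := by
  refine aeval_nodal_of_charpoly_eq ?_
  rw [← charpoly_transpose, charpoly_of_isUpperTriangular]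
  · simp [matA]
  · intro i j hij
    simp only [transpose_apply, matA, of_apply]
    grind

lemma aeval_matAs_nodal : aeval (matAs d θs φ) (Lagrange.nodal (range (d + 1)) θs) = 0 := by
  refine aeval_nodal_of_charpoly_eq ?_
  rw [charpoly_of_isUpperTriangular]
  · simp [matAs]
  · intro i j hij
    simp only [matAs, of_apply]
    grind

end Bidiagonal

section Chains

variable {K : Type*} [Field K] {d i j : ℕ} (θ θs φ : ℕ → K)

lemma aeval_tauPoly_matA_mulVec_unitVec (hi : i ≤ d) :
    aeval (matA d θ) (tauPoly θ i) *ᵥ unitVec K d 0 = unitVec K d i := by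
  induction i with
  | zero => simp [tauPoly]
  | succ i ih =>
    rw [tauPoly, prod_range_succ_comm, map_mul, ← mulVec_mulVec, ← tauPoly, ih (by omega),
      aeval_X_sub_C_mulVec, matA_mulVec_unitVec θ (by omega), add_sub_cancel_left]

lemma unitVec_vecMul_aeval_tauPoly_matAs (hj : j ≤ d) :
    unitVec K d 0 ᵥ* aeval (matAs d θs φ) (tauPoly θs j) =
      (∏ k ∈ Icc 1 j, φ k) • unitVec K d j := by
  induction j with
  | zero => simp [tauPoly]
  | succ j ih =>
    rw [tauPoly, prod_range_succ, map_mul, ← vecMul_vecMul, ← tauPoly, ih (by omega),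
      smul_vecMul, vecMul_aeval_X_sub_C, unitVec_vecMul_matAs θs φ (by omega),
      add_sub_cancel_left, smul_smul, prod_Icc_succ_top (by omega)]

lemma aeval_etaPoly_matAs_mulVec_unitVec (hi : i ≤ d) :
    aeval (matAs d θs φ) (etaPoly d θs (d - i)) *ᵥ unitVec K d d =
      (∏ k ∈ Icc (i + 1) d, φ k) • unitVec K d i := by
  induction hi using Nat.decreasingInduction with
  | self => simp [etaPoly]
  | of_succ i hi ih =>
    rw [show d - i = d - (i + 1) + 1 by omega, etaPoly, prod_range_succ_comm, map_mul,
      ← mulVec_mulVec, ← etaPoly, ih, mulVec_smul, aeval_X_sub_C_mulVec,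
      show d - (d - (i + 1)) = i + 1 by omega, matAs_mulVec_unitVec_succ θs φ hi,
      add_sub_cancel_left, smul_smul, ← insert_Icc_add_one_left_eq_Icc (by omega : i + 1 ≤ d),
      prod_insert (by simp), mul_comm]

lemma unitVec_vecMul_aeval_etaPoly_matA (hj : j ≤ d) :
    unitVec K d d ᵥ* aeval (matA d θ) (etaPoly d θ (d - j)) = unitVec K d j := by
  induction hj using Nat.decreasingInduction with
  | self => simp [etaPoly]
  | of_succ j hj ih =>
    rw [show d - j = d - (j + 1) + 1 by omega, etaPoly, prod_range_succ, map_mul,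
      ← vecMul_vecMul, ← etaPoly, ih, vecMul_aeval_X_sub_C,
      show d - (d - (j + 1)) = j + 1 by omega, unitVec_succ_vecMul_matA θ hj,
      add_sub_cancel_left]

lemma eval_tauPoly_eq_zero {k : ℕ} (hk : 0 < k) : (tauPoly θ k).eval (θ 0) = 0 := by
  rw [tauPoly, eval_prod]
  exact prod_eq_zero (mem_range.2 hk) (by simp)

lemma eval_etaPoly_eq_zero {m : ℕ} (hm : 0 < m) : (etaPoly d θ m).eval (θ d) = 0 := by
  rw [etaPoly, eval_prod]
  exact prod_eq_zero (mem_range.2 hm) (by simp)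

lemma tauPoly_reverse : tauPoly (fun k => θ (d - k)) d = etaPoly d θ d := rfl

lemma etaPoly_reverse : etaPoly d (fun k => θ (d - k)) d = tauPoly θ d :=
  prod_congr rfl fun k hk => by simp only [Nat.sub_sub_self (mem_range.1 hk).le]

end Chains

section EigenCoordinates

variable {K : Type*} [Field K] {d k : ℕ} {θ θs φ : ℕ → K} {μ : K}

lemma dotProduct_unitVec_of_vecMul_matA_eq_smul {y : Fin (d + 1) → K}
    (hy : y ᵥ* matA d θ = μ • y) (hk : k ≤ d) :
    y ⬝ᵥ unitVec K d k = (tauPoly θ k).eval μ * (y ⬝ᵥ unitVec K d 0) := by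
  rw [← aeval_tauPoly_matA_mulVec_unitVec θ hk, dotProduct_mulVec,
    vecMul_aeval_of_vecMul_eq_smul hy, smul_dotProduct, smul_eq_mul]

lemma unitVec_dotProduct_of_matA_mulVec_eq_smul {t : Fin (d + 1) → K}
    (ht : matA d θ *ᵥ t = μ • t) (hk : k ≤ d) :
    unitVec K d k ⬝ᵥ t = (etaPoly d θ (d - k)).eval μ * (unitVec K d d ⬝ᵥ t) := by
  rw [← unitVec_vecMul_aeval_etaPoly_matA θ hk, ← dotProduct_mulVec,
    aeval_mulVec_of_mulVec_eq_smul ht, dotProduct_smul, smul_eq_mul]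

lemma unitVec_dotProduct_of_matAs_mulVec_eq_smul {u : Fin (d + 1) → K}
    (hu : matAs d θs φ *ᵥ u = μ • u) (hk : k ≤ d) :
    (∏ j ∈ Icc 1 k, φ j) * (unitVec K d k ⬝ᵥ u) =
      (tauPoly θs k).eval μ * (unitVec K d 0 ⬝ᵥ u) := by
  rw [← smul_eq_mul, ← smul_dotProduct, ← unitVec_vecMul_aeval_tauPoly_matAs θs φ hk,
    ← dotProduct_mulVec, aeval_mulVec_of_mulVec_eq_smul hu, dotProduct_smul, smul_eq_mul]

lemma dotProduct_unitVec_of_vecMul_matAs_eq_smul {y : Fin (d + 1) → K}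
    (hy : y ᵥ* matAs d θs φ = μ • y) (hk : k ≤ d) :
    (∏ j ∈ Icc (k + 1) d, φ j) * (y ⬝ᵥ unitVec K d k) =
      (etaPoly d θs (d - k)).eval μ * (y ⬝ᵥ unitVec K d d) := by
  rw [← smul_eq_mul, ← dotProduct_smul, ← aeval_etaPoly_matAs_mulVec_unitVec θs φ hk,
    dotProduct_mulVec, vecMul_aeval_of_vecMul_eq_smul hy, smul_dotProduct, smul_eq_mul]

end EigenCoordinates

section RankOne

variable {K : Type*} [Field K] {d : ℕ} {θ θs φ : ℕ → K} {P : Matrix (Fin (d + 1)) (Fin (d + 1)) K}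

lemma eq_vecMulVec_of_mul_matA_eq_smul (hP : P * matA d θ = θ 0 • P) :
    P = vecMulVec (P *ᵥ unitVec K d 0) (unitVec K d 0) := by
  ext r s
  have hrow : P r ᵥ* matA d θ = θ 0 • P r := by rw [← mul_apply_eq_vecMul, hP]; rfl
  rw [vecMulVec_apply, ← dotProduct_unitVec (P r) s,
    dotProduct_unitVec_of_vecMul_matA_eq_smul hrow (by omega)]
  rcases Nat.eq_zero_or_pos s with hs | hs
  · simp [tauPoly, hs, unitVec, mulVec]
  · simp [eval_tauPoly_eq_zero θ hs, unitVec, hs.ne']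

lemma eq_vecMulVec_of_matA_mul_eq_smul (hP : matA d θ * P = θ d • P) :
    P = vecMulVec (unitVec K d d) (unitVec K d d ᵥ* P) := by
  ext r s
  have hcol : matA d θ *ᵥ (fun i => P i s) = θ d • (fun i => P i s) := by
    ext i; exact congrFun (congrFun hP i) s
  rw [vecMulVec_apply, ← unitVec_dotProduct (fun i => P i s) r,
    unitVec_dotProduct_of_matA_mulVec_eq_smul hcol (by omega)]
  rcases eq_or_ne (r : ℕ) d with hr | hr
  · simp [etaPoly, hr, unitVec, vecMul]
  · simp [eval_etaPoly_eq_zero θ (by omega : 0 < d - r), unitVec, hr]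

lemma eq_vecMulVec_of_matAs_mul_eq_smul (hφ : ∀ k, 1 ≤ k → k ≤ d → φ k ≠ 0)
    (hP : matAs d θs φ * P = θs 0 • P) :
    P = vecMulVec (unitVec K d 0) (unitVec K d 0 ᵥ* P) := by
  ext r s
  have hcol : matAs d θs φ *ᵥ (fun i => P i s) = θs 0 • (fun i => P i s) := by
    ext i; exact congrFun (congrFun hP i) s
  have h := unitVec_dotProduct_of_matAs_mulVec_eq_smul hcol (k := r) (by omega)
  rw [unitVec_dotProduct] at h
  rw [vecMulVec_apply]
  rcases Nat.eq_zero_or_pos r with hr | hr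
  · obtain rfl : r = 0 := Fin.ext hr
    rw [show unitVec K d 0 0 = 1 from if_pos rfl, one_mul]
    exact (unitVec_dotProduct (fun i => P i s) 0).symm
  · have hprod : ∏ j ∈ Icc 1 (r : ℕ), φ j ≠ 0 :=
      prod_ne_zero_iff.2 fun j hj => hφ j (mem_Icc.1 hj).1 (by have := (mem_Icc.1 hj).2; omega)
    rw [eval_tauPoly_eq_zero θs hr, zero_mul, mul_eq_zero] at h
    simp [h.resolve_left hprod, unitVec, hr.ne']

lemma eq_vecMulVec_of_mul_matAs_eq_smul (hφ : ∀ k, 1 ≤ k → k ≤ d → φ k ≠ 0)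
    (hP : P * matAs d θs φ = θs d • P) :
    P = vecMulVec (P *ᵥ unitVec K d d) (unitVec K d d) := by
  ext r s
  have hrow : P r ᵥ* matAs d θs φ = θs d • P r := by rw [← mul_apply_eq_vecMul, hP]; rfl
  have h := dotProduct_unitVec_of_vecMul_matAs_eq_smul hrow (k := s) (by omega)
  rw [dotProduct_unitVec] at h
  rw [vecMulVec_apply]
  rcases eq_or_ne (s : ℕ) d with hs | hs
  · obtain rfl : s = Fin.last d := Fin.ext hs
    rw [show unitVec K d d (Fin.last d) = 1 from if_pos rfl, mul_one]
    exact (dotProduct_unitVec (P r) (Fin.last d)).symm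
  · have hprod : ∏ j ∈ Icc ((s : ℕ) + 1) d, φ j ≠ 0 :=
      prod_ne_zero_iff.2 fun j hj => hφ j (by have := (mem_Icc.1 hj).1; omega) (mem_Icc.1 hj).2
    rw [eval_etaPoly_eq_zero θs (by omega : 0 < d - s), zero_mul, mul_eq_zero] at h
    simp [h.resolve_left hprod, unitVec, hs]

end RankOne

section MatrixUnits

variable {K : Type*} [Field K] {d i j : ℕ} {θ θs φ : ℕ → K}

lemma aeval_tauPoly_mul_primIdem_zero_mul_eq_smul_vecMulVec
    (hφ : ∀ k, 1 ≤ k → k ≤ d → φ k ≠ 0) (hi : i ≤ d) (hj : j ≤ d) :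
    aeval (matA d θ) (tauPoly θ i) * primIdem d θs (matAs d θs φ) 0 *
        primIdem d θ (matA d θ) 0 * aeval (matAs d θs φ) (tauPoly θs j) =
      ((unitVec K d 0 ᵥ* primIdem d θs (matAs d θs φ) 0) ⬝ᵥ
          (primIdem d θ (matA d θ) 0 *ᵥ unitVec K d 0) * ∏ k ∈ Icc 1 j, φ k) •
        vecMulVec (unitVec K d i) (unitVec K d j) := by
  conv_lhs =>
    rw [eq_vecMulVec_of_matAs_mul_eq_smul hφ
        (self_mul_primIdem (aeval_matAs_nodal θs φ) d.zero_le),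
      eq_vecMulVec_of_mul_matA_eq_smul (primIdem_mul_self (aeval_matA_nodal θ) d.zero_le)]
  rw [mul_assoc (aeval _ _), vecMulVec_mul_vecMulVec, mul_vecMulVec, vecMulVec_mul,
    aeval_tauPoly_matA_mulVec_unitVec θ hi, smul_vecMul,
    unitVec_vecMul_aeval_tauPoly_matAs θs φ hj, smul_smul, vecMulVec_smul]

lemma aeval_etaPoly_mul_primIdem_last_mul_eq_smul_vecMulVec
    (hφ : ∀ k, 1 ≤ k → k ≤ d → φ k ≠ 0) (hi : i ≤ d) (hj : j ≤ d) :
    aeval (matAs d θs φ) (etaPoly d θs (d - i)) * primIdem d θ (matA d θ) d *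
        primIdem d θs (matAs d θs φ) d * aeval (matA d θ) (etaPoly d θ (d - j)) =
      ((unitVec K d d ᵥ* primIdem d θ (matA d θ) d) ⬝ᵥ
          (primIdem d θs (matAs d θs φ) d *ᵥ unitVec K d d) * ∏ k ∈ Icc (i + 1) d, φ k) •
        vecMulVec (unitVec K d i) (unitVec K d j) := by
  conv_lhs =>
    rw [eq_vecMulVec_of_matA_mul_eq_smul (self_mul_primIdem (aeval_matA_nodal θ) le_rfl),
      eq_vecMulVec_of_mul_matAs_eq_smul hφ
        (primIdem_mul_self (aeval_matAs_nodal θs φ) le_rfl)]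
  rw [mul_assoc (aeval _ _), vecMulVec_mul_vecMulVec, mul_vecMulVec, vecMulVec_mul,
    aeval_etaPoly_matAs_mulVec_unitVec θs φ hi, smul_vecMul,
    unitVec_vecMul_aeval_etaPoly_matA θ hj, smul_vecMulVec, vecMulVec_smul, smul_smul, mul_comm]

end MatrixUnits

section SplitBasis

variable {K : Type*} [Field K] {d : ℕ} (θ θs φ ϕ : ℕ → K) (v : ℕ → Fin (d + 1) → K)

def colMatrix : Matrix (Fin (d + 1)) (Fin (d + 1)) K := Matrix.of fun r k => v k r

lemma colMatrix_mulVec_unitVec {k : ℕ} (hk : k ≤ d) : colMatrix v *ᵥ unitVec K d k = v k := by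
  ext r
  rw [mulVec_unitVec_apply _ hk]
  rfl

lemma isUnit_colMatrix (hv : LinearIndependent K fun i : Fin (d + 1) => v i) :
    IsUnit (colMatrix v) :=
  linearIndependent_cols_iff_isUnit.1 hv

lemma matA_mul_colMatrix (hv1 : ∀ i < d, matA d θ *ᵥ v i - θ (d - i) • v i = v (i + 1))
    (hv2 : matA d θ *ᵥ v d - θ 0 • v d = 0) :
    matA d θ * colMatrix v = colMatrix v * matA d (fun k => θ (d - k)) := by
  refine ext_of_mulVec_single fun k => ?_
  rw [← unitVec_eq_single, ← mulVec_mulVec, ← mulVec_mulVec,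
    colMatrix_mulVec_unitVec v (by omega), matA_mulVec_unitVec _ (by omega), mulVec_add,
    mulVec_smul, colMatrix_mulVec_unitVec v (by omega)]
  rcases lt_or_eq_of_le (Nat.lt_succ_iff.1 k.2) with hk | hk
  · rw [colMatrix_mulVec_unitVec v hk, ← hv1 k hk, add_sub_cancel]
  · rw [hk, unitVec_eq_zero (by omega), mulVec_zero, add_zero, Nat.sub_self, ← sub_eq_zero, hv2]

lemma matAs_mul_colMatrix
    (hv3 : ∀ i, 1 ≤ i → i ≤ d → matAs d θs φ *ᵥ v i - θs i • v i = ϕ i • v (i - 1))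
    (hv4 : matAs d θs φ *ᵥ v 0 - θs 0 • v 0 = 0) :
    matAs d θs φ * colMatrix v = colMatrix v * matAs d θs ϕ := by
  refine ext_of_mulVec_single fun k => ?_
  rw [← unitVec_eq_single, ← mulVec_mulVec, ← mulVec_mulVec,
    colMatrix_mulVec_unitVec v (by omega)]
  obtain ⟨_ | k, hk⟩ := k
  · rw [matAs_mulVec_unitVec_zero, mulVec_smul, colMatrix_mulVec_unitVec v (by omega),
      ← sub_eq_zero, hv4]
  · rw [matAs_mulVec_unitVec_succ _ _ (by omega), mulVec_add, mulVec_smul, mulVec_smul,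
      colMatrix_mulVec_unitVec v (by omega), colMatrix_mulVec_unitVec v (by omega)]
    have h := hv3 (k + 1) (by omega) (by omega)
    rw [Nat.add_sub_cancel] at h
    rw [← h]
    exact (add_sub_cancel _ _).symm

end SplitBasis

section Scalars

variable {K : Type*} [Field K] {d : ℕ} {θ θs φ ϕ : ℕ → K}

lemma dotProduct_primIdem_zero_mul_eval_etaPoly {V : Matrix (Fin (d + 1)) (Fin (d + 1)) K}
    (hθ : Set.InjOn θ (range (d + 1))) (hθs : Set.InjOn θs (range (d + 1)))
    (hφ : ∀ k, 1 ≤ k → k ≤ d → φ k ≠ 0) (hV : IsUnit V)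
    (hAV : matA d θ * V = V * matA d (fun k => θ (d - k)))
    (hAsV : matAs d θs φ * V = V * matAs d θs ϕ) :
    (unitVec K d 0 ᵥ* primIdem d θs (matAs d θs φ) 0) ⬝ᵥ
        (primIdem d θ (matA d θ) 0 *ᵥ unitVec K d 0) *
      ((etaPoly d θ d).eval (θ 0) * (etaPoly d θs d).eval (θs 0)) = ∏ k ∈ Icc 1 d, ϕ k := by
  set e₀ := unitVec K d 0
  set eₗ := unitVec K d d
  set E := primIdem d θ (matA d θ) 0
  set Es := primIdem d θs (matAs d θs φ) 0
  set x := e₀ ᵥ* Es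
  set y := E *ᵥ e₀
  have hE : E = vecMulVec y e₀ :=
    eq_vecMulVec_of_mul_matA_eq_smul (primIdem_mul_self (aeval_matA_nodal θ) d.zero_le)
  have hEs : Es = vecMulVec e₀ x :=
    eq_vecMulVec_of_matAs_mul_eq_smul hφ (self_mul_primIdem (aeval_matAs_nodal θs φ) d.zero_le)
  set X := x ᵥ* V
  set Y := e₀ ᵥ* V
  have hX : X ᵥ* matAs d θs ϕ = θs 0 • X := vecMul_vecMul_eq_smul_of_mul_eq hAsV <| by
    rw [vecMul_vecMul, primIdem_mul_self (aeval_matAs_nodal θs φ) d.zero_le, vecMul_smul]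
  have hY : Y ᵥ* matA d (fun k => θ (d - k)) = θ 0 • Y :=
    vecMul_vecMul_eq_smul_of_mul_eq hAV (unitVec_zero_vecMul_matA θ)
  have hVd : V *ᵥ eₗ = (Y ⬝ᵥ eₗ) • y := by
    have hA : matA d θ *ᵥ (V *ᵥ eₗ) = θ 0 • (V *ᵥ eₗ) := mulVec_mulVec_eq_smul_of_mul_eq hAV <| by
      rw [matA_mulVec_unitVec_last, Nat.sub_self]
    have hEd : E *ᵥ (V *ᵥ eₗ) = V *ᵥ eₗ := primIdem_mulVec_of_mulVec_eq_smul hθ d.zero_le hA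
    rw [← hEd, hE, vecMulVec_mulVec, op_smul_eq_smul, dotProduct_mulVec]
  have hV0 : V *ᵥ e₀ = (X ⬝ᵥ e₀) • e₀ := by
    have hAs : matAs d θs φ *ᵥ (V *ᵥ e₀) = θs 0 • (V *ᵥ e₀) :=
      mulVec_mulVec_eq_smul_of_mul_eq hAsV (matAs_mulVec_unitVec_zero θs ϕ)
    have hEs0 : Es *ᵥ (V *ᵥ e₀) = V *ᵥ e₀ := primIdem_mulVec_of_mulVec_eq_smul hθs d.zero_le hAs
    rw [← hEs0, hEs, vecMulVec_mulVec, op_smul_eq_smul, dotProduct_mulVec]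
  have hXrec := dotProduct_unitVec_of_vecMul_matAs_eq_smul hX d.zero_le
  rw [zero_add, Nat.sub_zero] at hXrec
  have hYrec := dotProduct_unitVec_of_vecMul_matA_eq_smul hY le_rfl
  rw [tauPoly_reverse] at hYrec
  have hXd : X ⬝ᵥ eₗ = (Y ⬝ᵥ eₗ) * (x ⬝ᵥ y) := by
    rw [← dotProduct_mulVec, hVd, dotProduct_smul, smul_eq_mul]
  have hY0 : Y ⬝ᵥ e₀ = X ⬝ᵥ e₀ := by
    rw [← dotProduct_mulVec, hV0, dotProduct_smul, smul_eq_mul, unitVec_dotProduct_self d.zero_le,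
      mul_one]
  have hX0 : X ⬝ᵥ e₀ ≠ 0 := fun h0 => unitVec_ne_zero d.zero_le <|
    (mulVec_injective_iff_isUnit.2 hV) (by rw [hV0, h0, zero_smul, mulVec_zero])
  -- With `X_k = X ⬝ᵥ e_k`: `ϕ₁⋯ϕ_d X₀ = η*_d(θ*₀) X_d = η*_d(θ*₀) Y_d (x ⬝ y)`
  -- `= η*_d(θ*₀) η_d(θ₀) Y₀ (x ⬝ y)`, and `Y₀ = X₀`.
  refine mul_right_cancel₀ hX0 ?_
  linear_combination (-1 : K) * hXrec - (etaPoly d θs d).eval (θs 0) * hXd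
    - (etaPoly d θs d).eval (θs 0) * (x ⬝ᵥ y) * hYrec
    - (etaPoly d θs d).eval (θs 0) * (x ⬝ᵥ y) * (etaPoly d θ d).eval (θ 0) * hY0

lemma dotProduct_primIdem_last_mul_eval_tauPoly {W : Matrix (Fin (d + 1)) (Fin (d + 1)) K}
    (hθ : Set.InjOn θ (range (d + 1))) (hθs : Set.InjOn θs (range (d + 1)))
    (hφ : ∀ k, 1 ≤ k → k ≤ d → φ k ≠ 0) (hW : IsUnit W)
    (hWA : W * matA d θ = matA d (fun k => θ (d - k)) * W)
    (hWAs : W * matAs d θs φ = matAs d θs ϕ * W) :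
    (unitVec K d d ᵥ* primIdem d θ (matA d θ) d) ⬝ᵥ
        (primIdem d θs (matAs d θs φ) d *ᵥ unitVec K d d) *
      ((tauPoly θ d).eval (θ d) * (tauPoly θs d).eval (θs d)) = ∏ k ∈ Icc 1 d, ϕ k := by
  set e₀ := unitVec K d 0
  set eₗ := unitVec K d d
  set E := primIdem d θ (matA d θ) d
  set Es := primIdem d θs (matAs d θs φ) d
  set z := eₗ ᵥ* E
  set u := Es *ᵥ eₗ
  have hE : E = vecMulVec eₗ z :=
    eq_vecMulVec_of_matA_mul_eq_smul (self_mul_primIdem (aeval_matA_nodal θ) le_rfl)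
  have hEs : Es = vecMulVec u eₗ :=
    eq_vecMulVec_of_mul_matAs_eq_smul hφ (primIdem_mul_self (aeval_matAs_nodal θs φ) le_rfl)
  set U := W *ᵥ u
  set T := W *ᵥ eₗ
  have hU : matAs d θs ϕ *ᵥ U = θs d • U := mulVec_mulVec_eq_smul_of_mul_eq hWAs.symm <| by
    rw [mulVec_mulVec, self_mul_primIdem (aeval_matAs_nodal θs φ) le_rfl, smul_mulVec]
  have hT : matA d (fun k => θ (d - k)) *ᵥ T = θ d • T :=
    mulVec_mulVec_eq_smul_of_mul_eq hWA.symm (matA_mulVec_unitVec_last θ)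
  have hW0 : e₀ ᵥ* W = (e₀ ⬝ᵥ T) • z := by
    have hA : (e₀ ᵥ* W) ᵥ* matA d θ = θ d • (e₀ ᵥ* W) :=
      vecMul_vecMul_eq_smul_of_mul_eq hWA.symm <| by rw [unitVec_zero_vecMul_matA, Nat.sub_zero]
    have hE0 : (e₀ ᵥ* W) ᵥ* E = e₀ ᵥ* W := vecMul_primIdem_of_vecMul_eq_smul hθ le_rfl hA
    rw [← hE0, hE, vecMul_vecMulVec, dotProduct_mulVec]
  have hWd : eₗ ᵥ* W = (eₗ ⬝ᵥ U) • eₗ := by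
    have hAs : (eₗ ᵥ* W) ᵥ* matAs d θs φ = θs d • (eₗ ᵥ* W) :=
      vecMul_vecMul_eq_smul_of_mul_eq hWAs.symm (unitVec_last_vecMul_matAs θs ϕ)
    have hEsd : (eₗ ᵥ* W) ᵥ* Es = eₗ ᵥ* W := vecMul_primIdem_of_vecMul_eq_smul hθs le_rfl hAs
    calc eₗ ᵥ* W = (eₗ ᵥ* W) ᵥ* Es := hEsd.symm
      _ = (eₗ ⬝ᵥ U) • eₗ := by rw [hEs, vecMul_vecMulVec, ← dotProduct_mulVec]
  have hUrec := unitVec_dotProduct_of_matAs_mulVec_eq_smul hU le_rfl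
  have hTrec := unitVec_dotProduct_of_matA_mulVec_eq_smul hT d.zero_le
  rw [Nat.sub_zero, etaPoly_reverse] at hTrec
  have hU0 : e₀ ⬝ᵥ U = (e₀ ⬝ᵥ T) * (z ⬝ᵥ u) := by
    rw [dotProduct_mulVec, hW0, smul_dotProduct, smul_eq_mul]
  have hTd : eₗ ⬝ᵥ T = eₗ ⬝ᵥ U := by
    rw [dotProduct_mulVec, hWd, smul_dotProduct, smul_eq_mul, unitVec_dotProduct_self le_rfl,
      mul_one]
  have hUd : eₗ ⬝ᵥ U ≠ 0 := fun h0 => unitVec_ne_zero (K := K) (le_refl d) <|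
    (vecMul_injective_iff_isUnit.2 hW) (show eₗ ᵥ* W = 0 ᵥ* W by
      rw [hWd, h0, zero_smul, zero_vecMul])
  -- With `U_k = e_k ⬝ᵥ U`: `ϕ₁⋯ϕ_d U_d = τ*_d(θ*_d) U₀ = τ*_d(θ*_d) T₀ (z ⬝ u)`
  -- `= τ*_d(θ*_d) τ_d(θ_d) T_d (z ⬝ u)`, and `T_d = U_d`.
  refine mul_right_cancel₀ hUd ?_
  linear_combination (-1 : K) * hUrec - (tauPoly θs d).eval (θs d) * hU0
    - (tauPoly θs d).eval (θs d) * (z ⬝ᵥ u) * hTrec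
    - (tauPoly θs d).eval (θs d) * (z ⬝ᵥ u) * (tauPoly θ d).eval (θ d) * hTd

end Scalars

theorem matrix_units_two_expressions_general {K : Type*} [Field K] (d : ℕ) (θ θs φ ϕ : ℕ → K)
    (hθ : ∀ i ≤ d, ∀ j ≤ d, θ i = θ j → i = j)
    (hθs : ∀ i ≤ d, ∀ j ≤ d, θs i = θs j → i = j)
    (hφ : ∀ i, 1 ≤ i → i ≤ d → φ i ≠ 0)
    (v : ℕ → Fin (d + 1) → K)
    (hvli : LinearIndependent K fun i : Fin (d + 1) => v (i : ℕ))
    (hv1 : ∀ i < d, (matA d θ).mulVec (v i) - θ (d - i) • v i = v (i + 1))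
    (hv2 : (matA d θ).mulVec (v d) - θ 0 • v d = 0)
    (hv3 : ∀ i, 1 ≤ i → i ≤ d →
      (matAs d θs φ).mulVec (v i) - θs i • v i = ϕ i • v (i - 1))
    (hv4 : (matAs d θs φ).mulVec (v 0) - θs 0 • v 0 = 0) :
    ∀ i j : Fin (d + 1),
      (((etaPoly d θ d).eval (θ 0) * (etaPoly d θs d).eval (θs 0) / (∏ k ∈ Finset.Icc (1) (d), ϕ k)) / ∏ k ∈ Finset.Icc 1 (j : ℕ), φ k) •
        (Polynomial.aeval (matA d θ) (tauPoly θ ((i : ℕ))) * primIdem d θs (matAs d θs φ) 0 * primIdem d θ (matA d θ) 0 * Polynomial.aeval (matAs d θs φ) (tauPoly θs ((j : ℕ))))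
      = (((tauPoly θ d).eval (θ d) * (tauPoly θs d).eval (θs d) / (∏ k ∈ Finset.Icc (1) (d), ϕ k)) / ∏ k ∈ Finset.Icc ((i : ℕ) + 1) d, φ k) •
        (Polynomial.aeval (matAs d θs φ) (etaPoly d θs (d - (i : ℕ))) * primIdem d θ (matA d θ) d * primIdem d θs (matAs d θs φ) d * Polynomial.aeval (matA d θ) (etaPoly d θ (d - (j : ℕ)))) := by
  intro i j
  have hinj : ∀ {f : ℕ → K}, (∀ i ≤ d, ∀ j ≤ d, f i = f j → i = j) →
      Set.InjOn f (range (d + 1)) := fun hf a ha b hb =>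
    hf a (Nat.lt_succ_iff.1 (mem_range.1 ha)) b (Nat.lt_succ_iff.1 (mem_range.1 hb))
  have hV := isUnit_colMatrix v hvli
  have hdet := (isUnit_iff_isUnit_det _).1 hV
  have hAV := matA_mul_colMatrix θ v hv1 hv2
  have hAsV := matAs_mul_colMatrix θs φ ϕ v hv3 hv4
  have hlow := dotProduct_primIdem_zero_mul_eval_etaPoly (hinj hθ) (hinj hθs) hφ hV hAV hAsV
  have hhigh := dotProduct_primIdem_last_mul_eval_tauPoly (hinj hθ) (hinj hθs) hφ
    (isUnit_nonsing_inv_iff.2 hV) (nonsing_inv_mul_eq_of_mul_eq hdet hAV)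
    (nonsing_inv_mul_eq_of_mul_eq hdet hAsV)
  have hprod_ne : ∀ s ⊆ Icc 1 d, ∏ k ∈ s, φ k ≠ 0 := fun s hs =>
    prod_ne_zero_iff.2 fun k hk => hφ k (mem_Icc.1 (hs hk)).1 (mem_Icc.1 (hs hk)).2
  have hPj := hprod_ne (Icc 1 j) (Icc_subset_Icc le_rfl (by omega))
  have hPi := hprod_ne (Icc (i + 1) d) (Icc_subset_Icc (by omega) le_rfl)
  rw [aeval_tauPoly_mul_primIdem_zero_mul_eq_smul_vecMulVec hφ (by omega) (by omega),
    aeval_etaPoly_mul_primIdem_last_mul_eq_smul_vecMulVec hφ (by omega) (by omega),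
    smul_smul, smul_smul]
  congr 1
  rw [mul_comm _ (∏ k ∈ Icc 1 (j : ℕ), φ k), ← mul_assoc, div_mul_cancel₀ _ hPj,
    mul_comm _ (∏ k ∈ Icc ((i : ℕ) + 1) d, φ k), ← mul_assoc, div_mul_cancel₀ _ hPi,
    div_mul_eq_mul_div, div_mul_eq_mul_div, mul_comm _ (_ ⬝ᵥ _), hlow, mul_comm _ (_ ⬝ᵥ _), hhigh]

theorem matrix_units_two_expressions {K : Type*} [Field K] (d : ℕ) (θ θs φ ϕ : ℕ → K)
    (hθ : ∀ i ≤ d, ∀ j ≤ d, θ i = θ j → i = j)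
    (hθs : ∀ i ≤ d, ∀ j ≤ d, θs i = θs j → i = j)
    (hφ : ∀ i, 1 ≤ i → i ≤ d → φ i ≠ 0)
    (hE0 : ∀ i ≤ d, ∀ j ≤ d, 1 < |(i : ℤ) - (j : ℤ)| →
      primIdem d θ (matA d θ) i * matAs d θs φ * primIdem d θ (matA d θ) j = 0)
    (hE1 : ∀ i ≤ d, ∀ j ≤ d, |(i : ℤ) - (j : ℤ)| = 1 →
      primIdem d θ (matA d θ) i * matAs d θs φ * primIdem d θ (matA d θ) j ≠ 0)
    (hEs0 : ∀ i ≤ d, ∀ j ≤ d, 1 < |(i : ℤ) - (j : ℤ)| →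
      primIdem d θs (matAs d θs φ) i * matA d θ * primIdem d θs (matAs d θs φ) j = 0)
    (hEs1 : ∀ i ≤ d, ∀ j ≤ d, |(i : ℤ) - (j : ℤ)| = 1 →
      primIdem d θs (matAs d θs φ) i * matA d θ * primIdem d θs (matAs d θs φ) j ≠ 0)
    (hϕ : ∀ i, 1 ≤ i → i ≤ d → ϕ i ≠ 0)
    (v : ℕ → Fin (d + 1) → K)
    (hvli : LinearIndependent K fun i : Fin (d + 1) => v (i : ℕ))
    (hvsp : Submodule.span K (Set.range fun i : Fin (d + 1) => v (i : ℕ)) = ⊤)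
    (hv1 : ∀ i < d, (matA d θ).mulVec (v i) - θ (d - i) • v i = v (i + 1))
    (hv2 : (matA d θ).mulVec (v d) - θ 0 • v d = 0)
    (hv3 : ∀ i, 1 ≤ i → i ≤ d →
      (matAs d θs φ).mulVec (v i) - θs i • v i = ϕ i • v (i - 1))
    (hv4 : (matAs d θs φ).mulVec (v 0) - θs 0 • v 0 = 0) :
    ∀ i j : Fin (d + 1),
      (((etaPoly d θ d).eval (θ 0) * (etaPoly d θs d).eval (θs 0) / (∏ k ∈ Finset.Icc (1) (d), ϕ k)) / ∏ k ∈ Finset.Icc 1 (j : ℕ), φ k) •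
        (Polynomial.aeval (matA d θ) (tauPoly θ ((i : ℕ))) * primIdem d θs (matAs d θs φ) 0 * primIdem d θ (matA d θ) 0 * Polynomial.aeval (matAs d θs φ) (tauPoly θs ((j : ℕ))))
      = (((tauPoly θ d).eval (θ d) * (tauPoly θs d).eval (θs d) / (∏ k ∈ Finset.Icc (1) (d), ϕ k)) / ∏ k ∈ Finset.Icc ((i : ℕ) + 1) d, φ k) •
        (Polynomial.aeval (matAs d θs φ) (etaPoly d θs (d - (i : ℕ))) * primIdem d θ (matA d θ) d * primIdem d θs (matAs d θs φ) d * Polynomial.aeval (matA d θ) (etaPoly d θ (d - (j : ℕ)))) :=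
  matrix_units_two_expressions_general d θ θs φ ϕ hθ hθs hφ v hvli hv1 hv2 hv3 hv4
end
end

section
/- For 1≤i≤d the first split sequence satisfies φ_i = Σ_{k=i}^{d} tr((A A* − A* A) F_k) and φ_i = Σ_{k=0}^{i−1} tr((A* A − A A*) F_k); moreover the second split sequence satisfies ϕ_i = Σ_{k=i}^{d} tr((A A* − A* A) F^⇓_k) and ϕ_i = Σ_{k=0}^{i−1} tr((A* A − A A*) F^⇓_k). -/
open Polynomial Matrix Finset

noncomputable section

/-- `F_k`: the matrix whose `(k,k)`-entry is `1` and whose other entries are `0`. -/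
def matF {K : Type*} [Field K] (d : ℕ) (k : ℕ) : Matrix (Fin (d + 1)) (Fin (d + 1)) K :=
  Matrix.of fun a b => if (a : ℕ) = k ∧ (b : ℕ) = k then 1 else 0

/-!
In the standard basis `A` is lower and `A*` upper bidiagonal, so the `(k, k)` entry of
`A A* - A* A` is `φ_k - φ_{k+1}` (with `φ_0 = φ_{d+1} = 0`), and both sums for `φ_i` telescope.
The matrix `P` whose columns are `v_0, …, v_d` is invertible and satisfies `A P = P A'`,
`A* P = P A*'` and `F^⇓_k P = P F_k`, where `A'`, `A*'` are the bidiagonal matrices built from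
`θ_d, …, θ_0`, `θ*_0, …, θ*_d` and `ϕ`. Conjugation by `P` preserves traces, so the sums for
`ϕ_i` are the sums already computed, for the pair `A'`, `A*'` whose superdiagonal is `ϕ`.
-/

theorem Matrix.mul_apply_eq_mulVec_col {l m n α : Type*} [Fintype m] [NonUnitalNonAssocSemiring α]
    (M : Matrix l m α) (N : Matrix m n α) (i : l) (j : n) : (M * N) i j = (M *ᵥ N.col j) i :=
  rfl

theorem Matrix.trace_eq_of_semiconjBy {n R : Type*} [Fintype n] [DecidableEq n] [CommRing R]
    {P M N : Matrix n n R} (hP : IsUnit P) (h : SemiconjBy P N M) : trace N = trace M := by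
  have hM : M = P * N * P⁻¹ := by
    rw [h.eq, mul_assoc, mul_nonsing_inv _ ((isUnit_iff_isUnit_det P).mp hP), mul_one]
  rw [hM, trace_conj hP]

theorem Matrix.trace_commutator_mul_eq_of_semiconjBy {n R : Type*} [Fintype n] [DecidableEq n]
    [CommRing R] {P A B F A' B' F' : Matrix n n R} (hP : IsUnit P) (hA : SemiconjBy P A' A)
    (hB : SemiconjBy P B' B) (hF : SemiconjBy P F' F) :
    trace ((A * B - B * A) * F) = trace ((A' * B' - B' * A') * F') :=
  (trace_eq_of_semiconjBy hP
    (((hA.mul_right hB).sub_right (hB.mul_right hA)).mul_right hF)).symm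

section Bidiagonal

variable {K : Type*} [Field K] {d : ℕ}

lemma matA_apply_self (θ : ℕ → K) (k : Fin (d + 1)) : matA d θ k k = θ k := by
  simp [matA]

lemma matA_apply_succ_castSucc (θ : ℕ → K) (i : Fin d) : matA d θ i.succ i.castSucc = 1 := by
  simp [matA]

lemma matAs_apply_self (θs φ : ℕ → K) (k : Fin (d + 1)) : matAs d θs φ k k = θs k := by
  simp [matAs]

lemma matAs_apply_castSucc_succ (θs φ : ℕ → K) (i : Fin d) :
    matAs d θs φ i.castSucc i.succ = φ (i + 1) := by
  simp [matAs]

lemma matA_col_castSucc (θ : ℕ → K) (i : Fin d) :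
    (matA d θ).col i.castSucc = θ i • Pi.single i.castSucc 1 + Pi.single i.succ 1 := by
  ext a
  simp only [matA, col_apply, of_apply, Pi.add_apply, Pi.smul_apply, Pi.single_apply, Fin.ext_iff,
    Fin.val_castSucc, Fin.val_succ, smul_eq_mul]
  split_ifs <;> first | omega | simp_all

lemma matA_col_last (θ : ℕ → K) :
    (matA d θ).col (Fin.last d) = θ d • Pi.single (Fin.last d) 1 := by
  ext a
  simp only [matA, col_apply, of_apply, Pi.smul_apply, Pi.single_apply, Fin.ext_iff,
    Fin.val_last, smul_eq_mul]
  split_ifs <;> first | omega | simp_all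

lemma matAs_col_zero (θs φ : ℕ → K) :
    (matAs d θs φ).col 0 = θs 0 • Pi.single 0 1 := by
  ext a
  simp only [matAs, col_apply, of_apply, Pi.smul_apply, Pi.single_apply, Fin.ext_iff,
    Fin.val_zero, smul_eq_mul]
  split_ifs <;> first | omega | simp_all

lemma matAs_col_succ (θs φ : ℕ → K) (i : Fin d) :
    (matAs d θs φ).col i.succ =
      θs (i + 1) • Pi.single i.succ 1 + φ (i + 1) • Pi.single i.castSucc 1 := by
  ext a
  simp only [matAs, col_apply, of_apply, Pi.add_apply, Pi.smul_apply, Pi.single_apply, Fin.ext_iff,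
    Fin.val_castSucc, Fin.val_succ, smul_eq_mul]
  split_ifs <;> first | omega | simp_all

lemma matF_col (k : ℕ) (j : Fin (d + 1)) :
    (matF d k : Matrix _ _ K).col j = if (j : ℕ) = k then Pi.single j 1 else 0 := by
  ext a
  by_cases hj : (j : ℕ) = k
  · simp [matF, Pi.single_apply, Fin.ext_iff, hj, eq_comm]
  · simp [matF, hj]

lemma matA_mul_matAs_apply_self (θ θs φ : ℕ → K) (k : Fin (d + 1)) :
    (matA d θ * matAs d θs φ) k k = θ k * θs k + (Set.Icc 1 d).indicator φ k := by
  rw [mul_apply_eq_mulVec_col]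
  cases k using Fin.cases with
  | zero => simp [matAs_col_zero, mulVec_smul, matA_apply_self, mul_comm]
  | succ i =>
    simp [matAs_col_succ, mulVec_add, mulVec_smul, matA_apply_self, matA_apply_succ_castSucc,
      mul_comm]

lemma matAs_mul_matA_apply_self (θ θs φ : ℕ → K) (k : Fin (d + 1)) :
    (matAs d θs φ * matA d θ) k k = θs k * θ k + (Set.Icc 1 d).indicator φ (k + 1) := by
  rw [mul_apply_eq_mulVec_col]
  cases k using Fin.lastCases with
  | last => simp [matA_col_last, mulVec_smul, matAs_apply_self, mul_comm]
  | cast i =>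
    simp [matA_col_castSucc, mulVec_add, mulVec_smul, matAs_apply_self,
      matAs_apply_castSucc_succ, mul_comm]

lemma trace_mul_matF (M : Matrix (Fin (d + 1)) (Fin (d + 1)) K) {k : ℕ} (hk : k ≤ d) :
    trace (M * matF d k) = M ⟨k, by omega⟩ ⟨k, by omega⟩ := by
  have : matF d k = single (⟨k, by omega⟩ : Fin (d + 1)) ⟨k, by omega⟩ (1 : K) := by
    ext a b
    simp [matF, single_apply, Fin.ext_iff, eq_comm]
  simp [this, trace_mul_single]

lemma trace_commutator_mul_matF (θ θs φ : ℕ → K) {k : ℕ} (hk : k ≤ d) :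
    trace ((matA d θ * matAs d θs φ - matAs d θs φ * matA d θ) * matF d k) =
      (Set.Icc 1 d).indicator φ k - (Set.Icc 1 d).indicator φ (k + 1) := by
  rw [trace_mul_matF _ hk, Matrix.sub_apply, matA_mul_matAs_apply_self,
    matAs_mul_matA_apply_self]
  ring

lemma sum_Icc_trace_commutator_mul_matF (θ θs φ : ℕ → K) {i : ℕ} (hi : 1 ≤ i) (hid : i ≤ d) :
    ∑ k ∈ Icc i d, trace ((matA d θ * matAs d θs φ - matAs d θs φ * matA d θ) * matF d k) =
      φ i := by
  have h (k) (hk : k ∈ Icc i d) :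
      trace ((matA d θ * matAs d θs φ - matAs d θs φ * matA d θ) * matF d k) =
        -((Set.Icc 1 d).indicator φ (k + 1) - (Set.Icc 1 d).indicator φ k) := by
    rw [trace_commutator_mul_matF θ θs φ (mem_Icc.1 hk).2, neg_sub]
  rw [sum_congr rfl h, sum_neg_distrib, sum_Icc_sub hid]
  simp [hi, hid]

lemma sum_range_trace_commutator_mul_matF (θ θs φ : ℕ → K) {i : ℕ} (hi : 1 ≤ i) (hid : i ≤ d) :
    ∑ k ∈ range i, trace ((matAs d θs φ * matA d θ - matA d θ * matAs d θs φ) * matF d k) =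
      φ i := by
  have h (k) (hk : k ∈ range i) :
      trace ((matAs d θs φ * matA d θ - matA d θ * matAs d θs φ) * matF d k) =
        (Set.Icc 1 d).indicator φ (k + 1) - (Set.Icc 1 d).indicator φ k := by
    rw [← neg_sub, neg_mul, trace_neg,
      trace_commutator_mul_matF θ θs φ (by rw [mem_range] at hk; omega), neg_sub]
  rw [sum_congr rfl h, sum_range_sub]
  simp [hi, hid]

variable {P M : Matrix (Fin (d + 1)) (Fin (d + 1)) K}

lemma semiconjBy_matA {θ : ℕ → K}
    (hcast : ∀ i : Fin d, M *ᵥ P.col i.castSucc - θ i • P.col i.castSucc = P.col i.succ)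
    (hlast : M *ᵥ P.col (Fin.last d) - θ d • P.col (Fin.last d) = 0) :
    SemiconjBy P (matA d θ) M := by
  refine ext_of_mulVec_single fun j => ?_
  rw [← mulVec_mulVec, ← mulVec_mulVec, mulVec_single_one, mulVec_single_one]
  cases j using Fin.lastCases with
  | last =>
    rw [matA_col_last, mulVec_smul, mulVec_single_one]
    exact (sub_eq_zero.mp hlast).symm
  | cast i =>
    rw [matA_col_castSucc, mulVec_add, mulVec_smul, mulVec_single_one, mulVec_single_one,
      ← hcast, add_sub_cancel]

lemma semiconjBy_matAs {θs ϕ : ℕ → K}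
    (hzero : M *ᵥ P.col 0 - θs 0 • P.col 0 = 0)
    (hsucc : ∀ i : Fin d,
      M *ᵥ P.col i.succ - θs (i + 1) • P.col i.succ = ϕ (i + 1) • P.col i.castSucc) :
    SemiconjBy P (matAs d θs ϕ) M := by
  refine ext_of_mulVec_single fun j => ?_
  rw [← mulVec_mulVec, ← mulVec_mulVec, mulVec_single_one, mulVec_single_one]
  cases j using Fin.cases with
  | zero =>
    rw [matAs_col_zero, mulVec_smul, mulVec_single_one]
    exact (sub_eq_zero.mp hzero).symm
  | succ i =>
    rw [matAs_col_succ, mulVec_add, mulVec_smul, mulVec_smul, mulVec_single_one,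
      mulVec_single_one, ← hsucc, add_sub_cancel]

lemma semiconjBy_matF {k : ℕ}
    (h : ∀ j : Fin (d + 1), M *ᵥ P.col j = if (j : ℕ) = k then P.col j else 0) :
    SemiconjBy P (matF d k) M := by
  refine ext_of_mulVec_single fun j => ?_
  rw [← mulVec_mulVec, ← mulVec_mulVec, mulVec_single_one, mulVec_single_one, h, matF_col]
  split_ifs <;> simp

end Bidiagonal

theorem split_sequence_trace_formula_general {K : Type*} [Field K] (d : ℕ) (θ θs φ ϕ : ℕ → K)
    (v : ℕ → Fin (d + 1) → K)
    (hvli : LinearIndependent K fun i : Fin (d + 1) => v (i : ℕ))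
    (hv1 : ∀ i < d, (matA d θ).mulVec (v i) - θ (d - i) • v i = v (i + 1))
    (hv2 : (matA d θ).mulVec (v d) - θ 0 • v d = 0)
    (hv3 : ∀ i, 1 ≤ i → i ≤ d →
      (matAs d θs φ).mulVec (v i) - θs i • v i = ϕ i • v (i - 1))
    (hv4 : (matAs d θs φ).mulVec (v 0) - θs 0 • v 0 = 0)
    (Fd : ℕ → Matrix (Fin (d + 1)) (Fin (d + 1)) K)
    (hFd : ∀ k ≤ d, ∀ j ≤ d, (Fd k).mulVec (v j) = if j = k then v j else 0) :
    ∀ i, 1 ≤ i → i ≤ d →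
      φ i = ∑ k ∈ Finset.Icc i d, Matrix.trace ((matA d θ * matAs d θs φ - matAs d θs φ * matA d θ) * matF d k)
      ∧ φ i = ∑ k ∈ Finset.range i, Matrix.trace ((matAs d θs φ * matA d θ - matA d θ * matAs d θs φ) * matF d k)
      ∧ ϕ i = ∑ k ∈ Finset.Icc i d, Matrix.trace ((matA d θ * matAs d θs φ - matAs d θs φ * matA d θ) * Fd k)
      ∧ ϕ i = ∑ k ∈ Finset.range i, Matrix.trace ((matAs d θs φ * matA d θ - matA d θ * matAs d θs φ) * Fd k) := by
  intro i hi hid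
  set P : Matrix (Fin (d + 1)) (Fin (d + 1)) K := Matrix.of fun a j => v j a
  have hP : IsUnit P := linearIndependent_cols_iff_isUnit.mp hvli
  have hA : SemiconjBy P (matA d fun j => θ (d - j)) (matA d θ) :=
    semiconjBy_matA (fun j => hv1 j j.isLt) (by rw [Nat.sub_self]; exact hv2)
  have hAs : SemiconjBy P (matAs d θs ϕ) (matAs d θs φ) :=
    semiconjBy_matAs hv4 fun j => hv3 (j + 1) (by omega) (by omega)
  have hF (k) (hk : k ≤ d) : SemiconjBy P (matF d k) (Fd k) :=
    semiconjBy_matF fun j => hFd k hk j (by omega)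
  refine ⟨(sum_Icc_trace_commutator_mul_matF θ θs φ hi hid).symm,
    (sum_range_trace_commutator_mul_matF θ θs φ hi hid).symm, ?_, ?_⟩
  · rw [sum_congr rfl fun k hk => trace_commutator_mul_eq_of_semiconjBy hP hA hAs
      (hF k (mem_Icc.1 hk).2)]
    exact (sum_Icc_trace_commutator_mul_matF _ θs ϕ hi hid).symm
  · rw [sum_congr rfl fun k hk => trace_commutator_mul_eq_of_semiconjBy hP hAs hA
      (hF k (by rw [mem_range] at hk; omega))]
    exact (sum_range_trace_commutator_mul_matF _ θs ϕ hi hid).symm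

theorem split_sequence_trace_formula {K : Type*} [Field K] (d : ℕ) (θ θs φ ϕ : ℕ → K)
    (hϕ : ∀ i, 1 ≤ i → i ≤ d → ϕ i ≠ 0)
    (v : ℕ → Fin (d + 1) → K)
    (hvli : LinearIndependent K fun i : Fin (d + 1) => v (i : ℕ))
    (hvsp : Submodule.span K (Set.range fun i : Fin (d + 1) => v (i : ℕ)) = ⊤)
    (hv1 : ∀ i < d, (matA d θ).mulVec (v i) - θ (d - i) • v i = v (i + 1))
    (hv2 : (matA d θ).mulVec (v d) - θ 0 • v d = 0)
    (hv3 : ∀ i, 1 ≤ i → i ≤ d →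
      (matAs d θs φ).mulVec (v i) - θs i • v i = ϕ i • v (i - 1))
    (hv4 : (matAs d θs φ).mulVec (v 0) - θs 0 • v 0 = 0)
    (Fd : ℕ → Matrix (Fin (d + 1)) (Fin (d + 1)) K)
    (hFd : ∀ k ≤ d, ∀ j ≤ d, (Fd k).mulVec (v j) = if j = k then v j else 0) :
    ∀ i, 1 ≤ i → i ≤ d →
      φ i = ∑ k ∈ Finset.Icc i d, Matrix.trace ((matA d θ * matAs d θs φ - matAs d θs φ * matA d θ) * matF d k)
      ∧ φ i = ∑ k ∈ Finset.range i, Matrix.trace ((matAs d θs φ * matA d θ - matA d θ * matAs d θs φ) * matF d k)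
      ∧ ϕ i = ∑ k ∈ Finset.Icc i d, Matrix.trace ((matA d θ * matAs d θs φ - matAs d θs φ * matA d θ) * Fd k)
      ∧ ϕ i = ∑ k ∈ Finset.range i, Matrix.trace ((matAs d θs φ * matA d θ - matA d θ * matAs d θs φ) * Fd k) :=
  split_sequence_trace_formula_general d θ θs φ ϕ v hvli hv1 hv2 hv3 hv4 Fd hFd
end
end
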